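/- Let f be a homeomorphism of a compact metric space (X,d) and let n be a positive integer. If f is n-expansive and has the L-shadowing property, then there exist ε > 0 and δ > 0 such that for all x, y ∈ X with d(x,y) < δ the following holds: whenever U is a finite subset of W^u_ε(x) whose points pairwise belong to different unstable sets (i.e., q ∉ W^u(q') for all distinct q, q' ∈ U) and S is a finite subset of W^s_ε(y) whose points pairwise belong to different stable sets (i.e., p ∉ W^s(p') for all distinct p, p' ∈ S), then |U| · |S| ≤ n. -/
import Mathlib


open Metric Filter Set

variable {X : Type*} [MetricSpace X]

/-- The iterate of a homeomorphism by an integer power. -/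
def hIter (f : X ≃ₜ X) (k : ℤ) (x : X) : X := (f.toEquiv ^ k) x

/-- The local stable set of `x` of size `c`:
points whose forward iterates stay `c`-close to those of `x`. -/
def localStable (f : X ≃ₜ X) (c : ℝ) (x : X) : Set X :=
  {y | ∀ k : ℕ, dist ((⇑f)^[k] y) ((⇑f)^[k] x) ≤ c}

/-- The local unstable set of `x` of size `c`:
points whose backward iterates stay `c`-close to those of `x`. -/
def localUnstable (f : X ≃ₜ X) (c : ℝ) (x : X) : Set X :=
  {y | ∀ k : ℕ, dist ((⇑f.symm)^[k] y) ((⇑f.symm)^[k] x) ≤ c}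

/-- The stable set of `x`. -/
def stableSet (f : X ≃ₜ X) (x : X) : Set X :=
  {y | Tendsto (fun k : ℕ => dist ((⇑f)^[k] y) ((⇑f)^[k] x)) atTop (nhds 0)}

/-- The unstable set of `x`. -/
def unstableSet (f : X ≃ₜ X) (x : X) : Set X :=
  {y | Tendsto (fun k : ℕ => dist ((⇑f.symm)^[k] y) ((⇑f.symm)^[k] x)) atTop (nhds 0)}

/-- `f` is positively `n`-expansive: for some `c > 0` every local stable set of
size `c` contains at most `n` points. -/
def PosNExpansive (f : X ≃ₜ X) (n : ℕ) : Prop :=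
  ∃ c > 0, ∀ x : X, ∀ S : Finset X, ↑S ⊆ localStable f c x → S.card ≤ n

/-- `f` is `n`-expansive: for some `c > 0` every dynamical ball of size `c`
contains at most `n` points. -/
def NExpansive (f : X ≃ₜ X) (n : ℕ) : Prop :=
  ∃ c > 0, ∀ x : X, ∀ S : Finset X,
    ↑S ⊆ localStable f c x ∩ localUnstable f c x → S.card ≤ n

/-- `f` is expansive. -/
def Expansive (f : X ≃ₜ X) : Prop :=
  ∃ c > 0, ∀ x y : X, (∀ k : ℤ, dist (hIter f k x) (hIter f k y) ≤ c) → x = y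

/-- `(x_k)_{k ∈ ℤ}` is a `δ`-pseudo-orbit. -/
def IsPseudoOrbit (f : X ≃ₜ X) (δ : ℝ) (x : ℤ → X) : Prop :=
  ∀ k : ℤ, dist (f (x k)) (x (k + 1)) < δ

/-- `(x_k)_{k ∈ ℤ}` is a two-sided limit pseudo-orbit:
`d(f(x_k), x_{k+1}) → 0` as `|k| → ∞`. -/
def IsTwoSidedLimitPseudoOrbit (f : X ≃ₜ X) (x : ℤ → X) : Prop :=
  Tendsto (fun k : ℤ => dist (f (x k)) (x (k + 1))) cofinite (nhds 0)

/-- `z` `ε`-shadows the sequence `(x_k)_{k ∈ ℤ}`. -/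
def Shadows (f : X ≃ₜ X) (ε : ℝ) (z : X) (x : ℤ → X) : Prop :=
  ∀ k : ℤ, dist (hIter f k z) (x k) < ε

/-- `z` two-sided limit shadows `(x_k)_{k ∈ ℤ}`. -/
def TwoSidedLimitShadows (f : X ≃ₜ X) (z : X) (x : ℤ → X) : Prop :=
  Tendsto (fun k : ℤ => dist (hIter f k z) (x k)) cofinite (nhds 0)

/-- The shadowing property. -/
def ShadowingProperty (f : X ≃ₜ X) : Prop :=
  ∀ ε > 0, ∃ δ > 0, ∀ x : ℤ → X, IsPseudoOrbit f δ x → ∃ z : X, Shadows f ε z x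

/-- The L-shadowing property. -/
def LShadowingProperty (f : X ≃ₜ X) : Prop :=
  ∀ ε > 0, ∃ δ > 0, ∀ x : ℤ → X, IsPseudoOrbit f δ x →
    IsTwoSidedLimitPseudoOrbit f x →
    ∃ z : X, Shadows f ε z x ∧ TwoSidedLimitShadows f z x

/-- Topological transitivity. -/
def TopTransitive (f : X ≃ₜ X) : Prop :=
  ∀ U V : Set X, IsOpen U → IsOpen V → U.Nonempty → V.Nonempty →
    ∃ k : ℕ, ((⇑f)^[k] '' U ∩ V).Nonempty

/-- There is a nontrivial finite `ε`-pseudo-orbit from `x` to `y`. -/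
def ChainFrom (f : X ≃ₜ X) (ε : ℝ) (x y : X) : Prop :=
  ∃ (l : ℕ) (c : ℕ → X), 0 < l ∧ c 0 = x ∧ c l = y ∧
    ∀ k < l, dist (f (c k)) (c (k + 1)) < ε

/-- `x` is a chain recurrent point of `f`. -/
def ChainRecurrent (f : X ≃ₜ X) (x : X) : Prop :=
  ∀ ε > 0, ChainFrom f ε x x

/-- The chain recurrent class of `x`. -/
def chainClass (f : X ≃ₜ X) (x : X) : Set X :=
  {y | ∀ ε > 0, ChainFrom f ε x y ∧ ChainFrom f ε y x}

/-- `x` is a periodic point of `f`. -/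
def Periodic (f : X ≃ₜ X) (x : X) : Prop :=
  ∃ k : ℕ, 1 ≤ k ∧ (⇑f)^[k] x = x

/-- `x` is a non-wandering point of `f`. -/
def NonWandering (f : X ≃ₜ X) (x : X) : Prop :=
  ∀ U : Set X, IsOpen U → x ∈ U → ∃ k : ℕ, 0 < k ∧ ((⇑f)^[k] '' U ∩ U).Nonempty

/-- The omega limit set of `x`: accumulation points of the forward orbit. -/
def omegaLimitSet (f : X ≃ₜ X) (x : X) : Set X :=
  {y | ∃ φ : ℕ → ℕ, StrictMono φ ∧ Tendsto (fun n => (⇑f)^[φ n] x) atTop (nhds y)}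

/-- `z` two-sided limit shadows `(x_k)` with gap `K`. -/
def TwoSidedLimitShadowsWithGap (f : X ≃ₜ X) (K : ℤ) (z : X) (x : ℤ → X) : Prop :=
  Tendsto (fun k : ℤ => dist (hIter f k z) (x k)) atBot (nhds 0) ∧
  Tendsto (fun k : ℤ => dist (hIter f (K + k) z) (x k)) atTop (nhds 0)

lemma hIter_add_one (f : X ≃ₜ X) (k : ℤ) (x : X) : hIter f (k+1) x = f (hIter f k x) := by
  simp [hIter, add_comm k 1, zpow_add, Equiv.Perm.mul_apply]

lemma hIter_natCast (f : X ≃ₜ X) (m : ℕ) (x : X) : hIter f (m : ℤ) x = (⇑f)^[m] x := by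
  induction m with
  | zero => rfl
  | succ m ih => rw [Function.iterate_succ_apply', ← ih]; push_cast; rw [hIter_add_one]

lemma hIter_sub_one (f : X ≃ₜ X) (k : ℤ) (x : X) : hIter f (k-1) x = f.symm (hIter f k x) := by
  have := hIter_add_one f (k-1) x
  simp at this
  rw [this]; simp

lemma hIter_neg_natCast (f : X ≃ₜ X) (m : ℕ) (x : X) : hIter f (-(m : ℤ)) x = (⇑f.symm)^[m] x := by
  induction m with
  | zero => rfl
  | succ m ih =>
    rw [Function.iterate_succ_apply', ← ih]
    have h : (-((m:ℕ)+1:ℕ) : ℤ) = -(m:ℤ) - 1 := by push_cast; ring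
    rw [h, hIter_sub_one]

lemma tendsto_negCast : Tendsto (fun m : ℕ => -(m:ℤ)) atTop cofinite := by
  rw [← Nat.cofinite_eq_atTop]
  exact Function.Injective.tendsto_cofinite (by intro a b h; simpa using h)

lemma tendsto_natCast' : Tendsto (fun m : ℕ => (m:ℤ)) atTop cofinite := by
  rw [← Nat.cofinite_eq_atTop]
  exact Function.Injective.tendsto_cofinite (by intro a b h; simpa using h)

lemma aux_connect (f : X ≃ₜ X) (ε₀ δ' : ℝ)
    (hLs : ∀ x : ℤ → X, IsPseudoOrbit f δ' x → IsTwoSidedLimitPseudoOrbit f x →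
      ∃ z, Shadows f ε₀ z x ∧ TwoSidedLimitShadows f z x)
    (hδ' : 0 < δ') (q p : X) (hqp : dist (f q) (f p) < δ') :
    ∃ z : X, (∀ m : ℕ, dist ((⇑f.symm)^[m] z) ((⇑f.symm)^[m] q) ≤ ε₀) ∧
      (∀ m : ℕ, 1 ≤ m → dist ((⇑f)^[m] z) ((⇑f)^[m] p) ≤ ε₀) ∧
      z ∈ unstableSet f q ∧ z ∈ stableSet f p := by
  set po : ℤ → X := fun k => if k ≤ 0 then hIter f k q else hIter f k p with hpo
  have hzero : ∀ k : ℤ, k ≠ 0 → dist (f (po k)) (po (k+1)) = 0 := by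
    intro k hk
    by_cases h1 : k + 1 ≤ 0
    · have h0 : k ≤ 0 := by omega
      simp only [hpo, if_pos h1, if_pos h0, hIter_add_one, dist_self]
    · have h0 : ¬ k ≤ 0 := by omega
      simp only [hpo, if_neg h1, if_neg h0, hIter_add_one, dist_self]
  have hps : IsPseudoOrbit f δ' po := by
    intro k
    by_cases hk : k = 0
    · subst hk
      have e1 : po 0 = q := by simp [hpo, hIter]
      have e2 : po 1 = f p := by
        have : (1:ℤ) = 0 + 1 := by ring
        simp only [hpo, if_neg (by norm_num : ¬ (1:ℤ) ≤ 0)]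
        rw [this, hIter_add_one]; simp [hIter]
      rw [show (0:ℤ)+1 = 1 from rfl, e1, e2]; exact hqp
    · rw [hzero k hk]; exact hδ'
  have hlim : IsTwoSidedLimitPseudoOrbit f po := by
    unfold IsTwoSidedLimitPseudoOrbit
    refine (tendsto_const_nhds (α := ℤ) (x := (0:ℝ)) (f := cofinite)).congr' ?_
    apply Eventually.mono _ (fun k (h : k ≠ (0:ℤ)) => (hzero k h).symm)
    rw [eventually_cofinite]
    simpa using Set.finite_singleton (0:ℤ)
  obtain ⟨z, hsh, htl⟩ := hLs po hps hlim
  have hback : ∀ m : ℕ, dist ((⇑f.symm)^[m] z) ((⇑f.symm)^[m] q) ≤ ε₀ := by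
    intro m
    have := hsh (-(m:ℤ))
    rw [hIter_neg_natCast] at this
    have e : po (-(m:ℤ)) = (⇑f.symm)^[m] q := by
      simp only [hpo, if_pos (by omega : -(m:ℤ) ≤ 0), hIter_neg_natCast]
    rw [e] at this
    exact this.le
  have hfwd : ∀ m : ℕ, 1 ≤ m → dist ((⇑f)^[m] z) ((⇑f)^[m] p) ≤ ε₀ := by
    intro m hm
    have := hsh (m:ℤ)
    rw [hIter_natCast] at this
    have e : po (m:ℤ) = (⇑f)^[m] p := by
      simp only [hpo, if_neg (by omega : ¬ (m:ℤ) ≤ 0), hIter_natCast]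
    rw [e] at this
    exact this.le
  refine ⟨z, hback, hfwd, ?_, ?_⟩
  · have h1 := htl.comp tendsto_negCast
    apply Tendsto.congr _ h1
    intro m
    simp only [Function.comp_apply, hpo, if_pos (by omega : -(m:ℤ) ≤ 0),
      hIter_neg_natCast]
  · have h1 := htl.comp tendsto_natCast'
    apply Tendsto.congr' _ h1
    filter_upwards [eventually_ge_atTop 1] with m hm
    simp only [Function.comp_apply, hpo, if_neg (by omega : ¬ (m:ℤ) ≤ 0), hIter_natCast]

lemma tendsto_dist_trans {u v w : ℕ → X}
    (h1 : Tendsto (fun m => dist (v m) (u m)) atTop (nhds 0))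
    (h2 : Tendsto (fun m => dist (v m) (w m)) atTop (nhds 0)) :
    Tendsto (fun m => dist (u m) (w m)) atTop (nhds 0) := by
  have := h1.add h2
  rw [add_zero] at this
  exact squeeze_zero (fun m => dist_nonneg)
    (fun m => by
      calc dist (u m) (w m) ≤ dist (u m) (v m) + dist (v m) (w m) := dist_triangle _ _ _
        _ = dist (v m) (u m) + dist (v m) (w m) := by rw [dist_comm (u m)]) this

theorem stmt15 {X : Type*} [MetricSpace X] [CompactSpace X] (f : X ≃ₜ X) (n : ℕ)
    (hn : 0 < n) (hexp : NExpansive f n) (hL : LShadowingProperty f) :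
    ∃ ε > 0, ∃ δ > 0, ∀ x y : X, dist x y < δ →
      ∀ U S : Finset X,
        ↑U ⊆ localUnstable f ε x →
        (∀ q ∈ U, ∀ q' ∈ U, q ≠ q' → q ∉ unstableSet f q') →
        ↑S ⊆ localStable f ε y →
        (∀ p ∈ S, ∀ p' ∈ S, p ≠ p' → p ∉ stableSet f p') →
        U.card * S.card ≤ n := by
  classical
  obtain ⟨c, hc, hce⟩ := hexp
  obtain ⟨δ', hδ', hLs⟩ := hL (c/8) (by positivity)
  have hf : UniformContinuous f := CompactSpace.uniformContinuous_of_continuous f.continuous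
  rw [Metric.uniformContinuous_iff] at hf
  obtain ⟨η, hη, hη'⟩ := hf δ' hδ'
  set ε := min (c/8) (η/3) with hεdef
  have hε : 0 < ε := lt_min (by positivity) (by positivity)
  have hε1 : ε ≤ c/8 := min_le_left _ _
  have hε2 : ε ≤ η/3 := min_le_right _ _
  refine ⟨ε, hε, ε, hε, ?_⟩
  intro x y hxy U S hU hUd hS hSd
  have key : ∀ qp : X × X, ∃ z : X, qp ∈ U ×ˢ S →
      ((∀ m : ℕ, dist ((⇑f.symm)^[m] z) ((⇑f.symm)^[m] x) ≤ c/4) ∧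
       (∀ m : ℕ, dist ((⇑f)^[m] z) ((⇑f)^[m] y) ≤ c/2) ∧
       z ∈ unstableSet f qp.1 ∧ z ∈ stableSet f qp.2) := by
    rintro ⟨q, p⟩
    by_cases hmem : (q, p) ∈ U ×ˢ S
    · obtain ⟨hq, hp⟩ := Finset.mem_product.mp hmem
      have hqx : ∀ m : ℕ, dist ((⇑f.symm)^[m] q) ((⇑f.symm)^[m] x) ≤ ε := hU hq
      have hpy : ∀ m : ℕ, dist ((⇑f)^[m] p) ((⇑f)^[m] y) ≤ ε := hS hp
      have hqx0 : dist q x ≤ ε := by simpa using hqx 0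
      have hpy0 : dist p y ≤ ε := by simpa using hpy 0
      have hqp : dist q p < η := by
        calc dist q p ≤ dist q x + dist x y + dist y p := dist_triangle4 q x y p
          _ < ε + ε + ε := by rw [dist_comm y p]; linarith
          _ ≤ η := by linarith
      obtain ⟨z, hzb, hzf, hzu, hzs⟩ :=
        aux_connect f (c/8) δ' hLs hδ' q p (hη' hqp)
      refine ⟨z, fun _ => ⟨?_, ?_, hzu, hzs⟩⟩
      · intro m
        calc dist ((⇑f.symm)^[m] z) ((⇑f.symm)^[m] x)
            ≤ dist ((⇑f.symm)^[m] z) ((⇑f.symm)^[m] q)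
              + dist ((⇑f.symm)^[m] q) ((⇑f.symm)^[m] x) := dist_triangle _ _ _
          _ ≤ c/8 + ε := add_le_add (hzb m) (hqx m)
          _ ≤ c/4 := by linarith
      · intro m
        rcases Nat.eq_zero_or_pos m with hm | hm
        · subst hm
          have hzq : dist z q ≤ c/8 := by simpa using hzb 0
          simp only [Function.iterate_zero_apply]
          calc dist z y ≤ dist z q + dist q x + dist x y := dist_triangle4 z q x y
            _ ≤ c/8 + ε + ε := by linarith [le_of_lt hxy, hε.le]
            _ ≤ c/2 := by linarith
        · calc dist ((⇑f)^[m] z) ((⇑f)^[m] y)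
              ≤ dist ((⇑f)^[m] z) ((⇑f)^[m] p) + dist ((⇑f)^[m] p) ((⇑f)^[m] y) :=
                dist_triangle _ _ _
            _ ≤ c/8 + ε := add_le_add (hzf m hm) (hpy m)
            _ ≤ c/2 := by linarith
    · exact ⟨x, fun h => absurd h hmem⟩
  choose g hg using key
  have hinj : Set.InjOn g ↑(U ×ˢ S) := by
    intro a ha b hb hab
    rw [Finset.mem_coe] at ha hb
    obtain ⟨_, _, hau, has⟩ := hg a ha
    obtain ⟨_, _, hbu, hbs⟩ := hg b hb
    rw [hab] at hau has
    obtain ⟨haU, haS⟩ := Finset.mem_product.mp ha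
    obtain ⟨hbU, hbS⟩ := Finset.mem_product.mp hb
    have h1 : a.1 = b.1 := by
      by_contra hne
      exact hUd a.1 haU b.1 hbU hne (tendsto_dist_trans hau hbu)
    have h2 : a.2 = b.2 := by
      by_contra hne
      exact hSd a.2 haS b.2 hbS hne (tendsto_dist_trans has hbs)
    exact Prod.ext h1 h2
  have hcard : U.card * S.card = ((U ×ˢ S).image g).card := by
    rw [Finset.card_image_of_injOn hinj, Finset.card_product]
  rcases (U ×ˢ S).eq_empty_or_nonempty with hemp | ⟨a0, ha0⟩
  · rw [hcard, hemp]; simp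
  · obtain ⟨h0b, h0f, _, _⟩ := hg a0 ha0
    rw [hcard]
    apply hce (g a0)
    intro w hw
    rw [Finset.coe_image] at hw
    obtain ⟨a, ha, rfl⟩ := hw
    rw [Finset.mem_coe] at ha
    obtain ⟨hab, haf, _, _⟩ := hg a ha
    constructor
    · intro m
      calc dist ((⇑f)^[m] (g a)) ((⇑f)^[m] (g a0))
          ≤ dist ((⇑f)^[m] (g a)) ((⇑f)^[m] y) + dist ((⇑f)^[m] y) ((⇑f)^[m] (g a0)) :=
            dist_triangle _ _ _
        _ ≤ c/2 + c/2 := add_le_add (haf m) (by rw [dist_comm]; exact h0f m)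
        _ ≤ c := by linarith
    · intro m
      calc dist ((⇑f.symm)^[m] (g a)) ((⇑f.symm)^[m] (g a0))
          ≤ dist ((⇑f.symm)^[m] (g a)) ((⇑f.symm)^[m] x)
            + dist ((⇑f.symm)^[m] x) ((⇑f.symm)^[m] (g a0)) := dist_triangle _ _ _
        _ ≤ c/4 + c/4 := by
            rw [dist_comm ((⇑f.symm)^[m] x)]; exact add_le_add (hab m) (h0b m)
        _ ≤ c := by linarith
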